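/- arXiv:2604.19890 — 2 statements merged into one kernel-verified Lean document; each statement's English description precedes it below -/
import Mathlib

section
/- For an odd prime p, define LT0 : Z_p → Z_p by LT0(x) = 1 if the representative of x in (-(p-1)/2, ..., (p-1)/2] is negative (i.e., the canonical representative of x in {0,...,p-1} lies in {(p+1)/2, ..., p-1}), and LT0(x) = 0 otherwise. Then LT0(x) = Σ_{i=1}^{(p-1)/2} (1 - (x + i)^(p-1)) for all x in Z_p. -/
theorem stmt_2 (p : ℕ) [Fact p.Prime] (hodd : Odd p) (x : ZMod p) :
    (if (p + 1) / 2 ≤ x.val then (1 : ZMod p) else 0) =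
      ∑ i ∈ Finset.Icc 1 ((p - 1) / 2), (1 - (x + (i : ZMod p)) ^ (p - 1)) := by
  have hp := (Fact.out : p.Prime)
  have hp2 : 2 ≤ p := hp.two_le
  have hpodd : p % 2 = 1 := Nat.odd_iff.mp hodd
  have hterm : ∀ i : ℕ, (1 - (x + (i : ZMod p)) ^ (p - 1)) =
      if x + (i : ZMod p) = 0 then (1 : ZMod p) else 0 := by
    intro i
    by_cases h : x + (i : ZMod p) = 0
    · simp [h, zero_pow, Nat.sub_ne_zero_of_lt hp.one_lt]
    · simp [h, ZMod.pow_card_sub_one_eq_one h]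
  have key : ∀ i ∈ Finset.Icc 1 ((p - 1) / 2), (x + (i : ZMod p) = 0 ↔ i = (-x).val) := by
    intro i hi
    simp only [Finset.mem_Icc] at hi
    have hiltp : i < p := lt_of_le_of_lt hi.2 (by omega)
    constructor
    · intro h
      have h2 : (i : ZMod p) = -x := by linear_combination h
      have := congrArg ZMod.val h2
      rwa [ZMod.val_cast_of_lt hiltp] at this
    · intro h
      have : (i : ZMod p) = -x := by
        rw [h, ZMod.natCast_val, ZMod.cast_id]
      rw [this]; ring
  calc (if (p + 1) / 2 ≤ x.val then (1 : ZMod p) else 0)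
      = (if (-x).val ∈ Finset.Icc 1 ((p - 1) / 2) then (1 : ZMod p) else 0) := by
        have hxv : x.val < p := ZMod.val_lt x
        have hnegval : (-x).val = if x = 0 then 0 else p - x.val := ZMod.neg_val x
        by_cases hx0 : x = 0
        · simp only [hx0, neg_zero, ZMod.val_zero, Finset.mem_Icc]
          have : ¬ ((p + 1) / 2 ≤ (0 : ZMod p).val) := by
            simp [ZMod.val_zero]; omega
          simp [ZMod.val_zero]; omega
        · rw [hnegval, if_neg hx0]
          have hxvpos : 0 < x.val := by
            by_contra h
            exact hx0 ((ZMod.val_eq_zero x).mp (by omega))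
          simp only [Finset.mem_Icc]
          congr 1
          simp only [eq_iff_iff]
          omega
    _ = ∑ i ∈ Finset.Icc 1 ((p - 1) / 2), (if i = (-x).val then (1 : ZMod p) else 0) := by
        rw [Finset.sum_ite_eq' (Finset.Icc 1 ((p - 1) / 2)) (-x).val (fun _ => (1 : ZMod p))]
    _ = ∑ i ∈ Finset.Icc 1 ((p - 1) / 2), (1 - (x + (i : ZMod p)) ^ (p - 1)) := by
        refine Finset.sum_congr rfl fun i hi => ?_
        rw [hterm i, if_congr (key i hi) rfl rfl]
end

section
/- For every prime p and every r ≥ 2, the equality-with-zero function EQ : Z_{p^r} → Z_{p^r}, defined by EQ(0) = 1 and EQ(x) = 0 for x ≠ 0, is not a polynomial function over Z_{p^r}; that is, there is no polynomial P with coefficients in Z_{p^r} such that P(x) = EQ(x) for all x ∈ Z_{p^r}. -/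
/-!
If a polynomial `P` takes the value `1` at `0` and `0` elsewhere, then for `x ≠ 0` the divisibility
`x - 0 ∣ P(x) - P(0) = -1` makes `x` a unit. In `ℤ/p^r` with `r ≥ 2`, however, `p` is nonzero and
not a unit.
-/

open Polynomial

theorem isUnit_of_eval_eq_ite_eq_zero {R : Type*} [CommRing R] [DecidableEq R] (P : R[X])
    (hP : ∀ x, P.eval x = if x = 0 then 1 else 0) {x : R} (hx : x ≠ 0) : IsUnit x := by
  have hdvd : x - 0 ∣ P.eval x - P.eval 0 := sub_dvd_eval_sub x 0 P
  rw [hP x, hP 0, if_neg hx, if_pos rfl, sub_zero, zero_sub] at hdvd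
  exact isUnit_of_dvd_unit hdvd isUnit_one.neg

namespace ZMod

theorem natCast_ne_zero_mod_pow {p r : ℕ} (hp : 1 < p) (hr : 2 ≤ r) :
    (p : ZMod (p ^ r)) ≠ 0 := by
  rw [Ne, natCast_eq_zero_iff]
  intro h
  have := (Nat.pow_dvd_pow_iff_le_right hp).1 (h.trans (pow_one p).symm.dvd)
  omega

theorem not_isUnit_natCast_mod_pow {p r : ℕ} (hp : p ≠ 1) (hr : 0 < r) :
    ¬ IsUnit (p : ZMod (p ^ r)) := by
  rw [isUnit_iff_coprime, Nat.coprime_pow_right_iff hr, Nat.coprime_self]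
  exact hp

end ZMod

theorem stmt_8 (p : ℕ) (hp : p.Prime) (r : ℕ) (hr : 2 ≤ r) :
    ¬ ∃ P : Polynomial (ZMod (p ^ r)),
      ∀ x : ZMod (p ^ r), P.eval x = if x = 0 then 1 else 0 := by
  rintro ⟨P, hP⟩
  exact ZMod.not_isUnit_natCast_mod_pow hp.ne_one (by omega)
    (isUnit_of_eval_eq_ite_eq_zero P hP (ZMod.natCast_ne_zero_mod_pow hp.one_lt hr))
end
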